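/- arXiv:0912.1503 — 8 statements merged into one kernel-verified Lean document; each statement's English description precedes it below -/
import Mathlib

section
/- If a Steiner structure S_2[2,k,n] exists, then a Steiner system S(3, 2^k, 2^n) exists: the collection of all translates β + P, for P a k-dimensional subspace in the structure and β ∈ F_2^n, forms a collection of 2^k-subsets of F_2^n such that every 3-element subset of F_2^n is contained in exactly one of them. -/
/-!
Points `x, y, z` of `F₂ⁿ` lie in the translate `β + Q` of a subspace `Q` exactly
when `β + Q = x + Q` and `Q` contains the plane spanned by `y - x` and `z - x`. Over `F₂` these
two differences are linearly independent as soon as the points are distinct, so the Steiner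
structure supplies exactly one `Q ∈ S` containing that plane, hence exactly one block through
`x, y, z`.
-/

open Module

namespace Submodule

variable {K V : Type*} [Ring K] [AddCommGroup V] [Module K V] {P : Submodule K V} {β x y z : V}

theorem mem_image_add_left_iff : x ∈ (β + ·) '' (P : Set V) ↔ x - β ∈ P := by
  rw [Set.image_add_left, Set.mem_preimage, neg_add_eq_sub, SetLike.mem_coe]

theorem image_add_left_eq_of_mem (hx : x ∈ (β + ·) '' (P : Set V)) :
    (β + ·) '' (P : Set V) = (x + ·) '' (P : Set V) := by
  rw [mem_image_add_left_iff] at hx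
  ext y
  rw [mem_image_add_left_iff, mem_image_add_left_iff, ← sub_sub_sub_cancel_right y x β]
  exact (P.sub_mem_iff_left hx).symm

theorem triple_subset_image_add_left_iff :
    {x, y, z} ⊆ (β + ·) '' (P : Set V) ↔
      (β + ·) '' (P : Set V) = (x + ·) '' (P : Set V) ∧ span K {y - x, z - x} ≤ P := by
  simp only [Set.insert_subset_iff, Set.singleton_subset_iff, span_le, SetLike.mem_coe]
  constructor
  · rintro ⟨hx, hy, hz⟩
    rw [image_add_left_eq_of_mem hx, mem_image_add_left_iff] at hy hz
    exact ⟨image_add_left_eq_of_mem hx, hy, hz⟩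
  · rintro ⟨heq, hP⟩
    simpa only [heq, mem_image_add_left_iff, sub_self, P.zero_mem, true_and] using hP

end Submodule

theorem Submodule.natCard_image_add_left {K V : Type*} [DivisionRing K] [AddCommGroup V]
    [Module K V] (P : Submodule K V) [Module.Finite K P] (β : V) :
    Nat.card ((β + ·) '' (P : Set V)) = Nat.card K ^ finrank K P := by
  rw [Nat.card_image_of_injective (add_right_injective β)]
  exact natCard_eq_pow_finrank

theorem ZMod.linearIndependent_pair_of_ne {V : Type*} [AddCommGroup V] [Module (ZMod 2) V]
    {u v : V} (hu : u ≠ 0) (hv : v ≠ 0) (huv : u ≠ v) :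
    LinearIndependent (ZMod 2) ![u, v] := by
  rw [LinearIndependent.pair_iff' hu]
  intro a
  obtain rfl | rfl : a = 0 ∨ a = 1 := by revert a; decide
  · rw [zero_smul]
    exact hv.symm
  · rw [one_smul]
    exact huv

section Translates

variable {K V : Type*} [Field K] [AddCommGroup V] [Module K V]

def translates (S : Set (Submodule K V)) : Set (Set V) :=
  {B | ∃ P ∈ S, ∃ β : V, B = (β + ·) '' (P : Set V)}

theorem existsUnique_mem_translates_triple_subset {S : Set (Submodule K V)}
    (hsteiner : ∀ R : Submodule K V, finrank K R = 2 → ∃! P, P ∈ S ∧ R ≤ P) {x y z : V}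
    (hind : LinearIndependent K ![y - x, z - x]) :
    ∃! B, B ∈ translates S ∧ {x, y, z} ⊆ B := by
  have hR : finrank K (Submodule.span K {y - x, z - x}) = 2 := by
    rw [← Matrix.range_cons_cons_empty, finrank_span_eq_card hind, Fintype.card_fin]
  obtain ⟨P, ⟨hPS, hRP⟩, huniq⟩ := hsteiner _ hR
  refine ⟨(x + ·) '' (P : Set V), ⟨⟨P, hPS, x, rfl⟩,
    Submodule.triple_subset_image_add_left_iff.2 ⟨rfl, hRP⟩⟩, ?_⟩
  rintro _ ⟨⟨Q, hQS, β, rfl⟩, hsub⟩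
  obtain ⟨heq, hRQ⟩ := Submodule.triple_subset_image_add_left_iff.1 hsub
  rw [heq, huniq Q ⟨hQS, hRQ⟩]

end Translates

theorem steiner_structure_implies_steiner_system_general (n k : ℕ)
    (S : Set (Submodule (ZMod 2) (Fin n → ZMod 2)))
    (hdim : ∀ P ∈ S, finrank (ZMod 2) P = k)
    (hsteiner : ∀ R : Submodule (ZMod 2) (Fin n → ZMod 2),
      finrank (ZMod 2) R = 2 → ∃! P, P ∈ S ∧ R ≤ P) :
    ∃ 𝓑 : Set (Set (Fin n → ZMod 2)),
      𝓑 = {B | ∃ P ∈ S, ∃ β : Fin n → ZMod 2, B = (β + ·) '' (P : Set (Fin n → ZMod 2))} ∧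
      (∀ B ∈ 𝓑, Nat.card B = 2 ^ k) ∧
      (∀ x y z : Fin n → ZMod 2, x ≠ y → x ≠ z → y ≠ z →
        ∃! B, B ∈ 𝓑 ∧ ({x, y, z} : Set (Fin n → ZMod 2)) ⊆ B) := by
  refine ⟨translates S, rfl, ?_, fun x y z hxy hxz hyz => ?_⟩
  · rintro _ ⟨P, hP, β, rfl⟩
    rw [Submodule.natCard_image_add_left, Nat.card_zmod, hdim P hP]
  · exact existsUnique_mem_translates_triple_subset hsteiner <|
      ZMod.linearIndependent_pair_of_ne (sub_ne_zero.2 hxy.symm) (sub_ne_zero.2 hxz.symm)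
        (sub_left_injective.ne hyz)

theorem steiner_structure_implies_steiner_system (n k : ℕ)
    (hk : 2 ≤ k) (hkn : k ≤ n)
    (S : Set (Submodule (ZMod 2) (Fin n → ZMod 2)))
    (hdim : ∀ P ∈ S, finrank (ZMod 2) P = k)
    (hsteiner : ∀ R : Submodule (ZMod 2) (Fin n → ZMod 2),
      finrank (ZMod 2) R = 2 → ∃! P, P ∈ S ∧ R ≤ P) :
    ∃ 𝓑 : Set (Set (Fin n → ZMod 2)),
      𝓑 = {B | ∃ P ∈ S, ∃ β : Fin n → ZMod 2, B = (β + ·) '' (P : Set (Fin n → ZMod 2))} ∧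
      (∀ B ∈ 𝓑, Nat.card B = 2 ^ k) ∧
      (∀ x y z : Fin n → ZMod 2, x ≠ y → x ≠ z → y ≠ z →
        ∃! B, B ∈ 𝓑 ∧ ({x, y, z} : Set (Fin n → ZMod 2)) ⊆ B) :=
  steiner_structure_implies_steiner_system_general n k S hdim hsteiner
end

section
/- For all 1 ≤ k ≤ n, C_q(n, k, 1) = ⌈(q^n − 1)/(q^k − 1)⌉. -/
open Module

/-- Minimum size of a q-covering design C_q[n,k,r] over the field F. -/
noncomputable def covNum (F : Type) [Field F] [Fintype F] (n k r : ℕ) : ℕ :=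
  sInf {m | ∃ S : Finset (Submodule F (Fin n → F)), S.card = m ∧
    (∀ W ∈ S, finrank F W = k) ∧
    ∀ R : Submodule F (Fin n → F), finrank F R = r → ∃ W ∈ S, R ≤ W}

/-- Minimum size of a q-Turán design T_q[n,k,r] over the field F. -/
noncomputable def turNum (F : Type) [Field F] [Fintype F] (n k r : ℕ) : ℕ :=
  sInf {m | ∃ S : Finset (Submodule F (Fin n → F)), S.card = m ∧
    (∀ W ∈ S, finrank F W = r) ∧
    ∀ K : Submodule F (Fin n → F), finrank F K = k → ∃ W ∈ S, W ≤ K}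

/-- Gaussian binomial coefficient [m choose r]_q, as the number of r-dimensional
subspaces of an m-dimensional space over F (with |F| = q). -/
noncomputable def gaussBinom (F : Type) [Field F] [Fintype F] (m r : ℕ) : ℕ :=
  Nat.card {W : Submodule F (Fin m → F) // finrank F W = r}

/-
Lower bound: a `k`-dimensional subspace contains only `q ^ k - 1` nonzero vectors.

Upper bound: put `m = n - k` and write `F ^ n ≅ U × K` with `dim U = k` and `K = 𝔽_{q ^ m}`.
For an `F`-linear `f : U → K`, the `q ^ m` graphs of the maps `a • f` (`a ∈ K`) are
`k`-dimensional and cover every `(x, y)` with `f x ≠ 0`, because `(x, y)` lies on the graph of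
`(y / f x) • f`. The remaining vectors form `ker (f ∘ fst)`. If `k ≤ m`, take `f` injective: the
remainder is `≅ K` and is covered recursively. If `m < k`, take `U = K × F ^ (k - m)` and
`f = fst`: the remainder is itself `k`-dimensional. In both cases the count adds up to
`⌈(q ^ n - 1) / (q ^ k - 1)⌉`.
-/

open LinearMap

universe u

section PointCover

variable {F V : Type*} [Field F] [AddCommGroup V] [Module F V]

/-- `S` covers every point of the projective space of `V` by `k`-dimensional subspaces. -/
def IsPointCover (k : ℕ) (S : Finset (Submodule F V)) : Prop :=
  (∀ W ∈ S, finrank F W = k) ∧ ∀ v : V, v ≠ 0 → ∃ W ∈ S, v ∈ W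

variable {k : ℕ} {S : Finset (Submodule F V)}

theorem isPointCover_iff_forall_finrank_eq_one :
    IsPointCover k S ↔ (∀ W ∈ S, finrank F W = k) ∧
      ∀ R : Submodule F V, finrank F R = 1 → ∃ W ∈ S, R ≤ W := by
  refine and_congr_right fun _ => ⟨fun hS R hR => ?_, fun hS v hv => ?_⟩
  · obtain ⟨v, hv, hspan⟩ := finrank_eq_one_iff'.1 hR
    obtain ⟨W, hW, hvW⟩ := hS v (by simpa using hv)
    refine ⟨W, hW, fun w hw => ?_⟩
    obtain ⟨c, hc⟩ := hspan ⟨w, hw⟩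
    rw [show w = c • (v : V) from congrArg Subtype.val hc.symm]
    exact W.smul_mem c hvW
  · obtain ⟨W, hW, hle⟩ := hS _ (finrank_span_singleton hv)
    exact ⟨W, hW, hle (Submodule.mem_span_singleton_self v)⟩

theorem isPointCover_singleton_top (h : finrank F V = k) :
    IsPointCover k {(⊤ : Submodule F V)} :=
  ⟨by simpa [finrank_top] using h, fun _ _ => ⟨⊤, Finset.mem_singleton_self _, trivial⟩⟩

namespace IsPointCover

theorem pow_finrank_sub_one_le [Finite F] [FiniteDimensional F V] (hS : IsPointCover k S) :
    Nat.card F ^ finrank F V - 1 ≤ S.card * (Nat.card F ^ k - 1) := by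
  classical
  have : Finite V := Module.finite_of_finite F
  have := Fintype.ofFinite V
  have hcover : Finset.univ.erase (0 : V) ⊆ S.biUnion fun W => (W : Set V).toFinset.erase 0 := by
    intro v hv
    obtain ⟨W, hW, hvW⟩ := hS.2 v (Finset.ne_of_mem_erase hv)
    exact Finset.mem_biUnion.2 ⟨W, hW, by simpa [Finset.ne_of_mem_erase hv] using hvW⟩
  have hW : ∀ W ∈ S, ((W : Set V).toFinset.erase 0).card = Nat.card F ^ k - 1 := by
    intro W hW
    rw [Finset.card_erase_of_mem (by simp), Set.toFinset_card, Fintype.card_eq_nat_card,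
      SetLike.coe_sort_coe, natCard_eq_pow_finrank (K := F), hS.1 W hW]
  calc Nat.card F ^ finrank F V - 1 = (Finset.univ.erase (0 : V)).card := by
        rw [Finset.card_erase_of_mem (Finset.mem_univ _), Finset.card_univ,
          Fintype.card_eq_nat_card, natCard_eq_pow_finrank (K := F) (V := V)]
    _ ≤ ∑ W ∈ S, ((W : Set V).toFinset.erase 0).card :=
        (Finset.card_le_card hcover).trans Finset.card_biUnion_le
    _ = S.card * (Nat.card F ^ k - 1) := by
        rw [Finset.sum_congr rfl hW, Finset.sum_const, smul_eq_mul]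

theorem le_card_of_mul_lt [Finite F] [FiniteDimensional F V] {s : ℕ} (hS : IsPointCover k S)
    (hs : s * (Nat.card F ^ k - 1) < Nat.card F ^ finrank F V - 1 + (Nat.card F ^ k - 1)) :
    s ≤ S.card := by
  have := hS.pow_finrank_sub_one_le
  rw [← Nat.lt_succ_iff]
  refine Nat.lt_of_mul_lt_mul_right (a := Nat.card F ^ k - 1) ?_
  rw [Nat.succ_mul]
  omega

theorem map_linearEquiv {V' : Type*} [AddCommGroup V'] [Module F V'] (e : V ≃ₗ[F] V')
    (hS : IsPointCover k S) :
    IsPointCover k (S.map (Submodule.orderIsoMapComap e).toEquiv.toEmbedding) := by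
  refine ⟨fun W hW => ?_, fun v hv => ?_⟩
  · obtain ⟨W', hW', rfl⟩ := Finset.mem_map.1 hW
    exact (LinearEquiv.finrank_map_eq e W').trans (hS.1 W' hW')
  · obtain ⟨W, hW, hvW⟩ := hS.2 (e.symm v) (by simpa using hv)
    exact ⟨_, Finset.mem_map_of_mem _ hW, e.symm v, hvW, e.apply_symm_apply v⟩

theorem union_image_subtype [DecidableEq (Submodule F V)] (R : Submodule F V)
    (hS : ∀ W ∈ S, finrank F W = k) (hout : ∀ v ∉ R, ∃ W ∈ S, v ∈ W)
    {T : Finset (Submodule F R)} (hT : IsPointCover k T) :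
    IsPointCover k (S ∪ T.image (Submodule.map R.subtype)) := by
  refine ⟨fun W hW => ?_, fun v hv => ?_⟩
  · rcases Finset.mem_union.1 hW with hW | hW
    · exact hS W hW
    · obtain ⟨W', hW', rfl⟩ := Finset.mem_image.1 hW
      exact (Submodule.finrank_map_subtype_eq R W').trans (hT.1 W' hW')
  · by_cases hvR : v ∈ R
    · obtain ⟨W, hW, hvW⟩ := hT.2 ⟨v, hvR⟩ (by simpa using hv)
      exact ⟨_, Finset.mem_union_right _ (Finset.mem_image_of_mem _ hW), _, hvW, rfl⟩
    · obtain ⟨W, hW, hvW⟩ := hout v hvR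
      exact ⟨W, Finset.mem_union_left _ hW, hvW⟩

end IsPointCover

end PointCover

section Graphs

variable {F : Type*} [Field F]

theorem LinearMap.finrank_graph {U W : Type*} [AddCommGroup U] [Module F U] [AddCommGroup W]
    [Module F W] (f : U →ₗ[F] W) : finrank F f.graph = finrank F U := by
  rw [graph_eq_range_prod]
  exact finrank_range_of_inj fun _ _ h => congrArg Prod.fst h

theorem exists_injective_of_finrank_le {U W : Type*} [AddCommGroup U] [Module F U]
    [AddCommGroup W] [Module F W] [FiniteDimensional F U] [FiniteDimensional F W]
    (h : finrank F U ≤ finrank F W) : ∃ f : U →ₗ[F] W, Function.Injective f :=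
  ⟨(finBasis F U).constr F (finBasis F W ∘ Fin.castLE h),
    (finBasis F U).injective_constr_of_linearIndependent
      ((finBasis F W).linearIndependent.comp _ (Fin.castLE_injective h))⟩

variable {U K : Type*} [AddCommGroup U] [Module F U] [Field K] [Algebra F K]

theorem mem_graph_smul_of_apply_ne_zero (f : U →ₗ[F] K) {x : U × K} (hx : f x.1 ≠ 0) :
    x ∈ ((x.2 / f x.1) • f).graph := by
  simp [div_mul_cancel₀ _ hx]

variable [FiniteDimensional F U] [FiniteDimensional F K]

theorem finrank_ker_comp_fst_add_finrank_range (f : U →ₗ[F] K) :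
    finrank F (ker (f ∘ₗ fst F U K)) + finrank F (range f) = finrank F U + finrank F K := by
  rw [← range_comp_of_range_eq_top (f := fst F U K) f Submodule.range_fst, add_comm,
    finrank_range_add_finrank_ker, finrank_prod]

theorem finrank_ker_comp_fst_of_injective {f : U →ₗ[F] K} (hf : Function.Injective f) :
    finrank F (ker (f ∘ₗ fst F U K)) = finrank F K := by
  have := finrank_ker_comp_fst_add_finrank_range f
  rw [finrank_range_of_inj hf] at this
  omega

theorem finrank_ker_comp_fst_of_range_eq_top {f : U →ₗ[F] K} (hf : range f = ⊤) :
    finrank F (ker (f ∘ₗ fst F U K)) = finrank F U := by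
  have := finrank_ker_comp_fst_add_finrank_range f
  rw [hf, finrank_top] at this
  omega

theorem exists_isPointCover_card_le_add_of_ker_comp_fst [Finite K] {V W : Type*}
    [AddCommGroup V] [Module F V] [FiniteDimensional F V] [AddCommGroup W] [Module F W]
    [FiniteDimensional F W] {k : ℕ} (f : U →ₗ[F] K) (hU : finrank F U = k)
    (hV : finrank F V = k + finrank F K) (hW : finrank F W = finrank F (ker (f ∘ₗ fst F U K)))
    {T : Finset (Submodule F W)} (hT : IsPointCover k T) :
    ∃ S : Finset (Submodule F V), IsPointCover k S ∧ S.card ≤ Nat.card K + T.card := by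
  classical
  have := Fintype.ofFinite K
  let R := ker (f ∘ₗ fst F U K)
  let graphs := Finset.univ.image fun a : K => (a • f).graph
  have hcover := IsPointCover.union_image_subtype R (S := graphs)
    (by simp [graphs, finrank_graph, hU])
    (fun x hx => ⟨_, Finset.mem_image_of_mem _ (Finset.mem_univ _),
      mem_graph_smul_of_apply_ne_zero f hx⟩)
    (hT.map_linearEquiv (LinearEquiv.ofFinrankEq W R hW))
  refine ⟨_, hcover.map_linearEquiv (LinearEquiv.ofFinrankEq (U × K) V ?_), ?_⟩
  · rw [finrank_prod, hU, hV]
  · rw [Finset.card_map, Nat.card_eq_fintype_card]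
    exact (Finset.card_union_le _ _).trans
      (add_le_add Finset.card_image_le (Finset.card_image_le.trans (Finset.card_map _).le))

end Graphs

theorem Nat.mul_sub_one_lt_of_le_pow_add {q k m s t : ℕ} (hq : 1 ≤ q) (hs : s ≤ q ^ m + t)
    (ht : t * (q ^ k - 1) < q ^ m - 1 + (q ^ k - 1)) :
    s * (q ^ k - 1) < q ^ (k + m) - 1 + (q ^ k - 1) := by
  rw [pow_add]
  have hk : 1 ≤ q ^ k := Nat.one_le_pow _ _ hq
  have hm : 1 ≤ q ^ m := Nat.one_le_pow _ _ hq
  generalize q ^ k = A at *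
  generalize q ^ m = B at *
  obtain ⟨c, rfl⟩ : ∃ c, A = c + 1 := ⟨A - 1, by omega⟩
  obtain ⟨d, rfl⟩ : ∃ d, B = d + 1 := ⟨B - 1, by omega⟩
  rw [show (c + 1) * (d + 1) = c * d + c + d + 1 by ring]
  simp only [Nat.add_sub_cancel] at *
  nlinarith

theorem Nat.cast_eq_ceil_div_of_le_of_lt {a c s : ℕ} (hc : 0 < c) (hle : a ≤ s * c)
    (hlt : s * c < a + c) : (s : ℤ) = ⌈(a : ℚ) / c⌉ := by
  have hc' : (0 : ℚ) < c := by exact_mod_cast hc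
  rw [eq_comm, Int.ceil_eq_iff, div_le_iff₀ hc', lt_div_iff₀ hc']
  push_cast
  refine ⟨?_, by exact_mod_cast hle⟩
  have : ((s * c : ℕ) : ℚ) < a + c := by exact_mod_cast hlt
  push_cast at this
  linarith

section FiniteField

variable {F : Type u} [Field F] [Finite F]

theorem exists_isPointCover_card_le_pow_add {k m : ℕ} (hm : m ≠ 0) {V W : Type u}
    [AddCommGroup V] [Module F V] [FiniteDimensional F V] [AddCommGroup W] [Module F W]
    [FiniteDimensional F W] (hV : finrank F V = k + m) (hW : finrank F W = max k m)
    {T : Finset (Submodule F W)} (hT : IsPointCover k T) :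
    ∃ S : Finset (Submodule F V), IsPointCover k S ∧ S.card ≤ Nat.card F ^ m + T.card := by
  have : NeZero m := ⟨hm⟩
  have : Fact (ringChar F).Prime := ⟨CharP.char_is_prime F _⟩
  let K := FiniteField.Extension F (ringChar F) m
  have hK : finrank F K = m := FiniteField.finrank_extension F _ m
  rw [← FiniteField.natCard_extension F (ringChar F) m]
  rcases le_or_gt k m with hkm | hmk
  · obtain ⟨f, hf⟩ := exists_injective_of_finrank_le (U := Fin k → F) (W := K)
      (by rwa [finrank_fin_fun, hK])
    refine exists_isPointCover_card_le_add_of_ker_comp_fst f (finrank_fin_fun F)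
      (by rw [hV, hK]) ?_ hT
    rw [hW, finrank_ker_comp_fst_of_injective hf, hK, max_eq_right hkm]
  · have hU : finrank F (K × (Fin (k - m) → F)) = k := by
      rw [finrank_prod, hK, finrank_fin_fun]; omega
    refine exists_isPointCover_card_le_add_of_ker_comp_fst (fst F K _) hU (by rw [hV, hK]) ?_ hT
    rw [hW, finrank_ker_comp_fst_of_range_eq_top Submodule.range_fst, hU, max_eq_left hmk.le]

theorem exists_isPointCover_card_mul_lt {k : ℕ} (hk : 1 ≤ k) (n : ℕ) (V : Type u)
    [AddCommGroup V] [Module F V] [FiniteDimensional F V] (hV : finrank F V = n) (hkn : k ≤ n) :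
    ∃ S : Finset (Submodule F V), IsPointCover k S ∧
      S.card * (Nat.card F ^ k - 1) < Nat.card F ^ n - 1 + (Nat.card F ^ k - 1) := by
  induction n using Nat.strong_induction_on generalizing V with | _ n ih =>
  have hq : 1 < Nat.card F := Finite.one_lt_card
  rcases hkn.eq_or_lt with rfl | hkn
  · refine ⟨{⊤}, isPointCover_singleton_top hV, ?_⟩
    have := Nat.one_lt_pow (by omega : k ≠ 0) hq
    simp only [Finset.card_singleton, one_mul]
    omega
  obtain ⟨m, rfl⟩ : ∃ m, n = k + m := ⟨n - k, by omega⟩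
  rcases le_or_gt k m with hkm | hmk
  · obtain ⟨T, hT, hTcard⟩ := ih m (by omega) (Fin m → F) (by simp) hkm
    obtain ⟨S, hS, hScard⟩ := exists_isPointCover_card_le_pow_add (by omega) hV
      (by simp [max_eq_right hkm]) hT
    exact ⟨S, hS, Nat.mul_sub_one_lt_of_le_pow_add hq.le hScard hTcard⟩
  · obtain ⟨S, hS, hScard⟩ := exists_isPointCover_card_le_pow_add (W := Fin k → F)
      (by omega) hV (by simp [max_eq_left hmk.le]) (isPointCover_singleton_top (by simp))
    refine ⟨S, hS, Nat.mul_sub_one_lt_of_le_pow_add hq.le hScard ?_⟩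
    have := Nat.one_lt_pow (by omega : m ≠ 0) hq
    simp only [Finset.card_singleton, one_mul]
    omega

end FiniteField

theorem covNum_one_eq_card {F : Type} [Field F] [Fintype F] {n k : ℕ}
    {S : Finset (Submodule F (Fin n → F))} (hS : IsPointCover k S)
    (hlt : S.card * (Nat.card F ^ k - 1) < Nat.card F ^ n - 1 + (Nat.card F ^ k - 1)) :
    covNum F n k 1 = S.card := by
  have hS' := isPointCover_iff_forall_finrank_eq_one.1 hS
  refine le_antisymm (Nat.sInf_le ⟨S, rfl, hS'⟩) (le_csInf ⟨_, S, rfl, hS'⟩ ?_)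
  rintro _ ⟨S', rfl, hS''⟩
  exact (isPointCover_iff_forall_finrank_eq_one.2 hS'').le_card_of_mul_lt
    (by rwa [finrank_fin_fun])

theorem covNum_r_one (F : Type) [Field F] [Fintype F] (n k : ℕ)
    (hk1 : 1 ≤ k) (hkn : k ≤ n) :
    (covNum F n k 1 : ℤ) =
      ⌈(((Fintype.card F : ℚ)) ^ n - 1) / ((Fintype.card F : ℚ) ^ k - 1)⌉ := by
  obtain ⟨S, hS, hlt⟩ :=
    exists_isPointCover_card_mul_lt hk1 n (Fin n → F) (finrank_fin_fun F) hkn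
  have hle := hS.pow_finrank_sub_one_le
  rw [finrank_fin_fun] at hle
  have hq : 1 < Nat.card F := Finite.one_lt_card
  have hqk := Nat.one_lt_pow (by omega : k ≠ 0) hq
  have hqn := Nat.one_lt_pow (by omega : n ≠ 0) hq
  rw [covNum_one_eq_card hS hlt, Nat.cast_eq_ceil_div_of_le_of_lt (by omega) hle hlt,
    Nat.cast_sub hqn.le, Nat.cast_sub hqk.le, ← Nat.card_eq_fintype_card]
  push_cast
  rfl
end

section
/- For 1 ≤ k ≤ n, T_q(n, k, 1) = (q^{n−k+1} − 1)/(q − 1): the minimum number of 1-dimensional subspaces of F_q^n such that every k-dimensional subspace contains at least one of them equals the number of 1-dimensional subspaces of an (n−k+1)-dimensional space. -/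
/-!
The lines of a fixed subspace `U` of dimension `n - k + 1` form a Turán design, because every
`k`-dimensional subspace meets `U` nontrivially; there are `(q ^ (n - k + 1) - 1) / (q - 1)` of
them. Conversely, given fewer lines, build greedily a chain `W₀ < W₁ < ⋯ < W_k` containing none
of them: the `(j + 1)`-dimensional subspaces above `W_j` correspond to the
`(q ^ (n - j) - 1) / (q - 1)` points of `ℙ(V ⧸ W_j)`, and a line `P ⊄ W_j` lies only in the one
through the image of `P`.
-/

open Module

open scoped LinearAlgebra.Projectivization

section

variable {F V : Type*} [Field F] [AddCommGroup V] [Module F V] [FiniteDimensional F V]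

theorem Submodule.finrank_comap_mkQ (W : Submodule F V) (L : Submodule F (V ⧸ W)) :
    finrank F (L.comap W.mkQ) = finrank F W + finrank F L := by
  have hW : W ≤ L.comap W.mkQ := by
    simpa only [Submodule.ker_mkQ] using LinearMap.ker_le_comap (f := W.mkQ) (p := L)
  have := LinearMap.finrank_range_add_finrank_ker (W.mkQ.domRestrict (L.comap W.mkQ))
  rw [LinearMap.range_domRestrict, Submodule.map_comap_eq_of_surjective W.mkQ_surjective,
    LinearMap.ker_domRestrict, Submodule.ker_mkQ,
    (Submodule.comapSubtypeEquivOfLe hW).finrank_eq] at this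
  omega

theorem exists_finrank_succ_forall_not_le (W : Submodule F V) (S : Finset (Submodule F V))
    (hW : ∀ P ∈ S, ¬P ≤ W) (hS : S.card < Nat.card (ℙ F (V ⧸ W))) :
    ∃ X : Submodule F V, finrank F X = finrank F W + 1 ∧ ∀ P ∈ S, ¬P ≤ X := by
  classical
  obtain ⟨p, hp⟩ : ∃ p : ℙ F (V ⧸ W), p.submodule ∉ S.image (Submodule.map W.mkQ) := by
    by_contra! h
    have := Nat.card_le_card_of_injective (fun p ↦ (⟨p.submodule, h p⟩ : S.image _))
      fun p q hpq ↦ Projectivization.submodule_injective (congrArg Subtype.val hpq)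
    have := S.card_image_le (f := Submodule.map W.mkQ)
    simp only [Nat.card_eq_fintype_card, Fintype.card_coe] at *
    omega
  refine ⟨p.submodule.comap W.mkQ, by rw [Submodule.finrank_comap_mkQ, p.finrank_submodule],
    fun P hP hPX ↦ hp (Finset.mem_image.mpr ⟨P, hP, ?_⟩)⟩
  have hline : IsAtom p.submodule := Submodule.isAtom_iff_finrank_eq_one.mpr p.finrank_submodule
  refine (hline.le_iff.mp (Submodule.map_le_iff_le_comap.mpr hPX)).resolve_left ?_
  rw [← le_bot_iff, Submodule.map_le_iff_le_comap, Submodule.comap_bot, Submodule.ker_mkQ]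
  exact hW P hP

variable [Fintype F]

theorem Projectivization.card_eq_pow_finrank :
    Nat.card (ℙ F V) = (Fintype.card F ^ finrank F V - 1) / (Fintype.card F - 1) := by
  rw [Projectivization.card'', Module.natCard_eq_pow_finrank (K := F), Nat.card_eq_fintype_card]

theorem exists_finrank_eq_forall_not_le (S : Finset (Submodule F V)) (hS : ⊥ ∉ S) {k : ℕ}
    (hk : k ≤ finrank F V)
    (hcard : S.card < (Fintype.card F ^ (finrank F V - k + 1) - 1) / (Fintype.card F - 1)) :
    ∃ W : Submodule F V, finrank F W = k ∧ ∀ P ∈ S, ¬P ≤ W := by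
  induction k with
  | zero => exact ⟨⊥, finrank_bot F V, fun P hP hP' ↦ hS (le_bot_iff.mp hP' ▸ hP)⟩
  | succ k ih =>
    have hmono : (Fintype.card F ^ (finrank F V - (k + 1) + 1) - 1) / (Fintype.card F - 1) ≤
        (Fintype.card F ^ (finrank F V - k + 1) - 1) / (Fintype.card F - 1) :=
      Nat.div_le_div_right <| Nat.sub_le_sub_right
        (Nat.pow_le_pow_right Fintype.card_pos (by omega)) 1
    obtain ⟨W, hW, hWS⟩ := ih (by omega) (hcard.trans_le hmono)
    obtain ⟨X, hX, hXS⟩ := exists_finrank_succ_forall_not_le W S hWS <| by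
      rwa [Projectivization.card_eq_pow_finrank, Submodule.finrank_quotient, hW,
        show finrank F V - k = finrank F V - (k + 1) + 1 by omega]
    exact ⟨X, hW ▸ hX, hXS⟩

theorem card_le_of_forall_finrank_eq_exists_le (S : Finset (Submodule F V)) (hS : ⊥ ∉ S)
    {k : ℕ} (hk : k ≤ finrank F V) (hcov : ∀ K : Submodule F V, finrank F K = k → ∃ P ∈ S, P ≤ K) :
    (Fintype.card F ^ (finrank F V - k + 1) - 1) / (Fintype.card F - 1) ≤ S.card := by
  by_contra! hcard
  obtain ⟨W, hW, hWS⟩ := exists_finrank_eq_forall_not_le S hS hk hcard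
  obtain ⟨P, hP, hPW⟩ := hcov W hW
  exact hWS P hP hPW

theorem exists_lines_le_of_finrank_lt_add (U : Submodule F V) :
    ∃ S : Finset (Submodule F V), S.card = Nat.card (ℙ F U) ∧ (∀ P ∈ S, finrank F P = 1) ∧
      ∀ K : Submodule F V, finrank F V < finrank F K + finrank F U → ∃ P ∈ S, P ≤ K := by
  classical
  have : Finite (ℙ F U) :=
    (Projectivization.finite_iff_of_finite F U).mpr (Module.finite_of_finite F)
  have : Fintype (ℙ F U) := Fintype.ofFinite _
  have hinj : Function.Injective fun p : ℙ F U ↦ p.submodule.map U.subtype :=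
    (Submodule.map_injective_of_injective U.injective_subtype).comp
      Projectivization.submodule_injective
  refine ⟨Finset.univ.image fun p : ℙ F U ↦ p.submodule.map U.subtype, ?_, ?_, ?_⟩
  · rw [Finset.card_image_of_injective _ hinj, Finset.card_univ, Nat.card_eq_fintype_card]
  · simp only [Finset.mem_image, Finset.mem_univ, true_and, forall_exists_index]
    rintro _ p rfl
    rw [Submodule.finrank_map_subtype_eq, p.finrank_submodule]
  · intro K hK
    obtain ⟨v, hvK, hvU, hv⟩ : ∃ v ∈ K, v ∈ U ∧ v ≠ 0 := by
      simpa [Submodule.disjoint_def] using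
        mt Submodule.finrank_add_finrank_le_of_disjoint hK.not_ge
    refine ⟨_, Finset.mem_image_of_mem _
      (Finset.mem_univ (Projectivization.mk F (⟨v, hvU⟩ : U) (by simpa using hv))), ?_⟩
    rw [Projectivization.submodule_mk, Submodule.map_le_iff_le_comap,
      Submodule.span_singleton_le_iff_mem]
    exact hvK

end

theorem turNum_r_one (F : Type) [Field F] [Fintype F] (n k : ℕ)
    (hk1 : 1 ≤ k) (hkn : k ≤ n) :
    turNum F n k 1 = ((Fintype.card F) ^ (n - k + 1) - 1) / (Fintype.card F - 1) := by
  have hn : finrank F (Fin n → F) = n := Module.finrank_fin_fun F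
  obtain ⟨f, hf⟩ := exists_linearIndependent_of_le_finrank (R := F) (M := Fin n → F)
    (n := n - k + 1) (by omega)
  obtain ⟨S₀, hS₀, hS₀1, hS₀cov⟩ :=
    exists_lines_le_of_finrank_lt_add (Submodule.span F (Set.range f))
  rw [Projectivization.card_eq_pow_finrank, finrank_span_eq_card hf, Fintype.card_fin] at hS₀
  replace hS₀cov : ∀ K : Submodule F (Fin n → F), finrank F K = k → ∃ P ∈ S₀, P ≤ K :=
    fun K hK ↦ hS₀cov K (by rw [finrank_span_eq_card hf, Fintype.card_fin]; omega)
  refine le_antisymm (Nat.sInf_le ⟨S₀, hS₀, hS₀1, hS₀cov⟩)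
    (le_csInf ⟨_, S₀, hS₀, hS₀1, hS₀cov⟩ ?_)
  rintro _ ⟨S, rfl, hS1, hcov⟩
  have hS : ⊥ ∉ S := fun h ↦ by simpa using hS1 ⊥ h
  simpa only [hn] using card_le_of_forall_finrank_eq_exists_le S hS (hkn.trans hn.ge) hcov
end

section
/- If Q is a subspace of F_q^n of dimension ℓ < n and S is a set of 1-dimensional subspaces none of which is contained in Q, with |S|·(q^{ℓ+1} − q^ℓ) + q^ℓ − 1 < q^n − 1, then there exists a nonzero vector α ∈ F_q^n such that the subspace spanned by Q and α (of dimension ℓ+1) contains no element of S. -/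
/-
Call a vector bad if it lies in `Q` or in one of the `(ℓ+1)`-dimensional spaces `Q ⊔ B`, `B ∈ S`.
There are at most `q^ℓ + |S|(q^{ℓ+1} - q^ℓ) < q^n` bad vectors, so some `α` is good. Then
`Q ⊔ span {α}` has dimension `ℓ + 1`, and if it contained some `B ∈ S`, then, as `B ⊄ Q`, the
exchange property would put `α` in `Q ⊔ B`.
-/

open Module

open Submodule

section

variable {F V : Type*} [Field F] [AddCommGroup V] [Module F V]

theorem mem_sup_of_le_sup_span_singleton {Q B : Submodule F V} {α : V}
    (hBQ : ¬ B ≤ Q) (hB : B ≤ Q ⊔ span F {α}) : α ∈ Q ⊔ B := by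
  obtain ⟨b, hbB, hbQ⟩ := SetLike.not_le_iff_exists.mp hBQ
  obtain ⟨y, hy, z, hz, rfl⟩ := mem_sup.mp (hB hbB)
  obtain ⟨c, rfl⟩ := mem_span_singleton.mp hz
  have hc : c ≠ 0 := by
    rintro rfl
    simp_all
  have hα : α = c⁻¹ • (y + c • α - y) := by
    rw [add_sub_cancel_left, inv_smul_smul₀ hc]
  rw [hα]
  exact smul_mem _ _ (sub_mem (mem_sup_right hbB) (mem_sup_left hy))

theorem finrank_sup_eq_succ_of_not_le [FiniteDimensional F V] {Q B : Submodule F V}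
    (hB : finrank F B = 1) (hBQ : ¬ B ≤ Q) : finrank F ↥(Q ⊔ B) = finrank F Q + 1 := by
  have hinf : finrank F ↥(Q ⊓ B) = 0 := by
    have := finrank_lt_finrank_of_lt (inf_lt_right.mpr hBQ)
    omega
  have := finrank_sup_add_finrank_inf_eq Q B
  omega

theorem ncard_eq_card_pow_finrank [Fintype F] [Finite V] (W : Submodule F V) :
    (W : Set V).ncard = Fintype.card F ^ finrank F W := by
  rw [← Nat.card_coe_set_eq, SetLike.coe_sort_coe, natCard_eq_pow_finrank (K := F),
    Nat.card_eq_fintype_card]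

theorem ncard_diff_of_finrank_eq_succ [Fintype F] [Finite V] {Q W : Submodule F V}
    (hQW : Q ≤ W) (h : finrank F W = finrank F Q + 1) :
    ((W : Set V) \ Q).ncard =
      Fintype.card F ^ (finrank F Q + 1) - Fintype.card F ^ finrank F Q := by
  rw [Set.ncard_sdiff hQW, ncard_eq_card_pow_finrank, ncard_eq_card_pow_finrank, h]

theorem exists_notMem_sup_of_card_lt [Fintype F] [Finite V] (Q : Submodule F V)
    (S : Finset (Submodule F V)) (hS : ∀ B ∈ S, finrank F ↥(Q ⊔ B) = finrank F Q + 1)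
    (hcard : S.card * (Fintype.card F ^ (finrank F Q + 1) - Fintype.card F ^ finrank F Q)
      + Fintype.card F ^ finrank F Q < Fintype.card F ^ finrank F V) :
    ∃ α : V, α ∉ Q ∧ ∀ B ∈ S, α ∉ Q ⊔ B := by
  set q := Fintype.card F
  set ℓ := finrank F Q
  let bad : Set V := (Q : Set V) ∪ ⋃ B ∈ S, ((Q ⊔ B : Submodule F V) : Set V) \ Q
  have hbad : bad.ncard < Nat.card V := calc
    bad.ncard ≤ (Q : Set V).ncard + ∑ B ∈ S, (((Q ⊔ B : Submodule F V) : Set V) \ Q).ncard :=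
      (Set.ncard_union_le _ _).trans (Nat.add_le_add_left (S.set_ncard_biUnion_le _) _)
    _ = q ^ ℓ + S.card * (q ^ (ℓ + 1) - q ^ ℓ) := by
      rw [ncard_eq_card_pow_finrank, Finset.sum_congr rfl fun B hB =>
        ncard_diff_of_finrank_eq_succ le_sup_left (hS B hB), Finset.sum_const, smul_eq_mul]
    _ < q ^ finrank F V := by omega
    _ = Nat.card V := by rw [natCard_eq_pow_finrank (K := F), Nat.card_eq_fintype_card]
  obtain ⟨α, hα⟩ := (Set.ne_univ_iff_exists_notMem bad).mp fun h => by simp [h] at hbad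
  simp only [bad, Set.mem_union, Set.mem_iUnion, Set.mem_sdiff, not_or, not_exists, not_and] at hα
  exact ⟨α, hα.1, fun B hB hαB => hα.2 B hB hαB hα.1⟩

end

theorem extend_avoiding_subspace_general (F : Type) [Field F] [Fintype F] (n ℓ : ℕ)
    (Q : Submodule F (Fin n → F)) (hQ : finrank F Q = ℓ)
    (S : Finset (Submodule F (Fin n → F)))
    (hdim : ∀ B ∈ S, finrank F B = 1)
    (hnot : ∀ B ∈ S, ¬ B ≤ Q)
    (hcount : S.card * ((Fintype.card F) ^ (ℓ + 1) - (Fintype.card F) ^ ℓ)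
        + (Fintype.card F) ^ ℓ - 1 < (Fintype.card F) ^ n - 1) :
    ∃ α : Fin n → F, α ≠ 0 ∧
      finrank F ↥(Q ⊔ Submodule.span F {α}) = ℓ + 1 ∧
      ∀ B ∈ S, ¬ B ≤ Q ⊔ Submodule.span F {α} := by
  have hq : 0 < Fintype.card F ^ n := pow_pos Fintype.card_pos n
  obtain ⟨α, hαQ, hαS⟩ := exists_notMem_sup_of_card_lt Q S
    (fun B hB => finrank_sup_eq_succ_of_not_le (hdim B hB) (hnot B hB))
    (by rw [hQ, finrank_fin_fun]; omega)
  refine ⟨α, fun h => hαQ (h ▸ Q.zero_mem), by rw [finrank_sup_span_singleton hαQ, hQ],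
    fun B hB hle => hαS B hB (mem_sup_of_le_sup_span_singleton (hnot B hB) hle)⟩

theorem extend_avoiding_subspace (F : Type) [Field F] [Fintype F] (n ℓ : ℕ)
    (hℓ : ℓ < n)
    (Q : Submodule F (Fin n → F)) (hQ : finrank F Q = ℓ)
    (S : Finset (Submodule F (Fin n → F)))
    (hdim : ∀ B ∈ S, finrank F B = 1)
    (hnot : ∀ B ∈ S, ¬ B ≤ Q)
    (hcount : S.card * ((Fintype.card F) ^ (ℓ + 1) - (Fintype.card F) ^ ℓ)
        + (Fintype.card F) ^ ℓ - 1 < (Fintype.card F) ^ n - 1) :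
    ∃ α : Fin n → F, α ≠ 0 ∧
      finrank F ↥(Q ⊔ Submodule.span F {α}) = ℓ + 1 ∧
      ∀ B ∈ S, ¬ B ≤ Q ⊔ Submodule.span F {α} :=
  extend_avoiding_subspace_general F n ℓ Q hQ S hdim hnot hcount
end

section
/- C_q(n, n−1, k) = (q^{k+1} − 1)/(q − 1) for 1 ≤ k ≤ n−1: the minimum number of hyperplanes of F_q^n needed to contain every k-dimensional subspace in at least one of them equals (q^{k+1} − 1)/(q − 1). -/
/-!
A hyperplane is the kernel of a nonzero functional, so the hyperplanes of an `m`-dimensional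
space correspond to the points of the projective space of its dual: there are
`(q ^ m - 1) / (q - 1)` of them.

Upper bound: fix a surjection `π : F^n → F^(k+1)`. For a `k`-dimensional `R`, `π R` is proper,
hence lies in a hyperplane `H`, and `R ≤ π⁻¹ H`; the `(q ^ (k+1) - 1) / (q - 1)` preimages
`π⁻¹ H` are hyperplanes.

Lower bound: fewer hyperplanes than that miss some hyperplane `H` of the whole space, which then
lies in none of them. If `dim V = k + 1`, take `R = H`; otherwise the given hyperplanes cut `H`
in hyperplanes of `H`, and induction on the dimension produces `R` inside `H`.
-/

open Module

namespace Submodule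

variable {F V U : Type*} [Field F] [AddCommGroup V] [Module F V] [AddCommGroup U] [Module F U]

/-- Phrased with `+ 1`: `finrank F W = finrank F V - 1` would make `⊥` a hyperplane of a
zero-dimensional space. -/
def IsHyperplane (W : Submodule F V) : Prop :=
  finrank F W + 1 = finrank F V

theorem IsHyperplane.ne_top {W : Submodule F V} (hW : W.IsHyperplane) : W ≠ ⊤ := by
  rintro rfl
  rw [IsHyperplane, finrank_top] at hW
  omega

theorem IsHyperplane.exists_ker_eq [FiniteDimensional F V] {W : Submodule F V}
    (hW : W.IsHyperplane) : ∃ f : Dual F V, f ≠ 0 ∧ LinearMap.ker f = W := by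
  obtain ⟨f, hf, hWf⟩ := W.exists_le_ker_of_lt_top hW.ne_top.lt_top
  refine ⟨f, hf, (eq_of_le_of_finrank_eq hWf ?_).symm⟩
  have := Dual.finrank_ker_add_one_of_ne_zero hf
  unfold IsHyperplane at hW
  omega

theorem IsHyperplane.eq_of_le [FiniteDimensional F V] {W W' : Submodule F V}
    (hW : W.IsHyperplane) (hW' : W'.IsHyperplane) (h : W ≤ W') : W = W' :=
  eq_of_le_of_finrank_eq h (by unfold IsHyperplane at hW hW'; omega)

theorem IsHyperplane.comap [FiniteDimensional F V] [FiniteDimensional F U] {W : Submodule F V}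
    (hW : W.IsHyperplane) {g : U →ₗ[F] V} (hg : ¬ LinearMap.range g ≤ W) :
    (W.comap g).IsHyperplane := by
  obtain ⟨f, -, rfl⟩ := hW.exists_ker_eq
  have hfg : f ∘ₗ g ≠ 0 := fun h => hg (LinearMap.range_le_ker_iff.2 h)
  rw [IsHyperplane, ← LinearMap.ker_comp]
  exact Dual.finrank_ker_add_one_of_ne_zero hfg

theorem exists_isHyperplane_le [FiniteDimensional F V] {p : Submodule F V} (hp : p ≠ ⊤) :
    ∃ W : Submodule F V, W.IsHyperplane ∧ p ≤ W := by
  obtain ⟨f, hf, hpf⟩ := p.exists_le_ker_of_lt_top hp.lt_top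
  exact ⟨LinearMap.ker f, Dual.finrank_ker_add_one_of_ne_zero hf, hpf⟩

variable (F V) in
def isHyperplaneEquivFinrankEqOne [FiniteDimensional F V] :
    {W : Submodule F V // W.IsHyperplane} ≃
      {Φ : Submodule F (Dual F V) // finrank F Φ = 1} where
  toFun W := ⟨W.1.dualAnnihilator, by
    have := Subspace.finrank_add_finrank_dualAnnihilator_eq W.1
    have := W.2
    unfold IsHyperplane at this
    omega⟩
  invFun Φ := ⟨Φ.1.dualCoannihilator, by
    have := Subspace.finrank_add_finrank_dualCoannihilator_eq Φ.1
    have := Φ.2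
    unfold IsHyperplane
    omega⟩
  left_inv W := Subtype.ext Subspace.dualAnnihilator_dualCoannihilator_eq
  right_inv Φ := Subtype.ext Subspace.dualCoannihilator_dualAnnihilator_eq

theorem card_isHyperplane [Finite F] [FiniteDimensional F V] :
    Nat.card {W : Submodule F V // W.IsHyperplane} =
      (Nat.card F ^ finrank F V - 1) / (Nat.card F - 1) := by
  rw [Nat.card_congr (isHyperplaneEquivFinrankEqOne F V),
    ← Nat.card_congr (Projectivization.equivSubmodule F (Dual F V)),
    Projectivization.card'', Module.natCard_eq_pow_finrank (K := F), Subspace.dual_finrank_eq]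

variable [Finite F]

theorem exists_isHyperplane_forall_not_le [FiniteDimensional F V] {m : ℕ}
    (hm : m ≤ finrank F V) {S : Finset (Submodule F V)} (hS : ∀ W ∈ S, W.IsHyperplane)
    (hcard : S.card < (Nat.card F ^ m - 1) / (Nat.card F - 1)) :
    ∃ H : Submodule F V, H.IsHyperplane ∧ ∀ W ∈ S, ¬ H ≤ W := by
  have hθ : (Nat.card F ^ m - 1) / (Nat.card F - 1) ≤
      Nat.card {W : Submodule F V // W.IsHyperplane} := by
    rw [card_isHyperplane]
    exact Nat.div_le_div_right (Nat.sub_le_sub_right (Nat.pow_le_pow_right Nat.card_pos hm) 1)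
  obtain ⟨H, hHS⟩ : ∃ H : {W : Submodule F V // W.IsHyperplane}, H.1 ∉ S := by
    by_contra! h
    have := Nat.card_le_card_of_injective (β := S) (fun W => ⟨W.1, h W⟩)
      fun _ _ hWW' => Subtype.ext (Subtype.ext_iff.1 hWW' :)
    simp only [Nat.card_eq_fintype_card, Fintype.card_coe] at this
    omega
  exact ⟨H.1, H.2, fun W hW hle => hHS (H.2.eq_of_le (hS W hW) hle ▸ hW)⟩

theorem exists_finrank_eq_forall_not_le [FiniteDimensional F V] {k : ℕ}
    (hk : k + 1 ≤ finrank F V) {S : Finset (Submodule F V)} (hS : ∀ W ∈ S, W.IsHyperplane)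
    (hcard : S.card < (Nat.card F ^ (k + 1) - 1) / (Nat.card F - 1)) :
    ∃ R : Submodule F V, finrank F R = k ∧ ∀ W ∈ S, ¬ R ≤ W := by
  obtain ⟨d, hd⟩ := Nat.exists_eq_add_of_le hk
  induction d generalizing V with
  | zero =>
    obtain ⟨H, hH, hHS⟩ := exists_isHyperplane_forall_not_le hk hS hcard
    exact ⟨H, by unfold IsHyperplane at hH; omega, hHS⟩
  | succ d ih =>
    obtain ⟨H, hH, hHS⟩ := exists_isHyperplane_forall_not_le hk hS hcard
    have hHd : finrank F H = k + 1 + d := by unfold IsHyperplane at hH; omega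
    obtain ⟨R, hR, hRS⟩ := ih (S := S.image (comap H.subtype)) (by omega)
      (by
        simp only [Finset.mem_image, forall_exists_index, and_imp, forall_apply_eq_imp_iff₂]
        exact fun W hW => (hS W hW).comap (by rw [range_subtype]; exact hHS W hW))
      (Finset.card_image_le.trans_lt hcard) hHd
    exact ⟨R.map H.subtype, by rwa [finrank_map_subtype_eq],
      fun W hW hle => hRS _ (Finset.mem_image_of_mem _ hW) (map_le_iff_le_comap.1 hle)⟩

theorem exists_isHyperplane_cover_of_surjective [FiniteDimensional F V] [FiniteDimensional F U]
    {π : V →ₗ[F] U} (hπ : Function.Surjective π) :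
    ∃ S : Finset (Submodule F V), S.card = (Nat.card F ^ finrank F U - 1) / (Nat.card F - 1) ∧
      (∀ W ∈ S, W.IsHyperplane) ∧
      ∀ R : Submodule F V, finrank F R < finrank F U → ∃ W ∈ S, R ≤ W := by
  have := Module.finite_of_finite (R := F) (M := U)
  have := Fintype.ofFinite {H : Submodule F U // H.IsHyperplane}
  refine ⟨Finset.univ.image fun H : {H : Submodule F U // H.IsHyperplane} => H.1.comap π,
    ?_, ?_, ?_⟩
  · rw [Finset.card_image_of_injective _ fun _ _ h =>
      Subtype.ext (comap_injective_of_surjective hπ h),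
      Finset.card_univ, ← Nat.card_eq_fintype_card, card_isHyperplane]
  · simp only [Finset.mem_image, Finset.mem_univ, true_and, forall_exists_index]
    rintro _ H rfl
    exact H.2.comap (by rw [LinearMap.range_eq_top.2 hπ, top_le_iff]; exact H.2.ne_top)
  · intro R hR
    have hRπ : R.map π ≠ ⊤ := fun h => by
      have := finrank_map_le π R
      rw [h, finrank_top] at this
      omega
    obtain ⟨H, hH, hle⟩ := exists_isHyperplane_le hRπ
    exact ⟨_, Finset.mem_image_of_mem _ (Finset.mem_univ ⟨H, hH⟩), map_le_iff_le_comap.1 hle⟩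

end Submodule

theorem covNum_hyperplanes (F : Type) [Field F] [Fintype F] (n k : ℕ)
    (hk1 : 1 ≤ k) (hkn : k ≤ n - 1) :
    covNum F n (n - 1) k = ((Fintype.card F) ^ (k + 1) - 1) / (Fintype.card F - 1) := by
  have hk : k + 1 ≤ n := by omega
  have isHyperplane_iff (W : Submodule F (Fin n → F)) : W.IsHyperplane ↔ finrank F W = n - 1 := by
    rw [Submodule.IsHyperplane, finrank_fin_fun]
    omega
  rw [Fintype.card_eq_nat_card]
  obtain ⟨S, hcard, hS, hcover⟩ := Submodule.exists_isHyperplane_cover_of_surjective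
    (LinearMap.funLeft_surjective_of_injective F F _ (Fin.castLE_injective hk))
  rw [finrank_fin_fun] at hcard
  have hmem : _ ∈ {m | ∃ S : Finset (Submodule F (Fin n → F)), S.card = m ∧
      (∀ W ∈ S, finrank F W = n - 1) ∧
      ∀ R : Submodule F (Fin n → F), finrank F R = k → ∃ W ∈ S, R ≤ W} :=
    ⟨S, hcard, fun W hW => (isHyperplane_iff W).1 (hS W hW),
      fun R hR => hcover R (by simp [hR])⟩
  refine le_antisymm (Nat.sInf_le hmem) (le_csInf ⟨_, hmem⟩ ?_)
  rintro _ ⟨S', rfl, hS', hcover'⟩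
  by_contra! hlt
  obtain ⟨R, hR, hRS⟩ := Submodule.exists_finrank_eq_forall_not_le (by simpa using hk)
    (fun W hW => (isHyperplane_iff W).2 (hS' W hW)) hlt
  obtain ⟨W, hW, hle⟩ := hcover' R hR
  exact hRS W hW hle
end

section
/- C_q(n, k, r) ≥ ⌈((q^n − 1)/(q^k − 1)) · C_q(n−1, k−1, r−1)⌉ (q-analogue of the Schönheim bound). -/
open Module

/-!
Double counting the pairs `(v, W)` with `v ≠ 0` in a member `W` of an optimal covering `S` shows
that some nonzero `v` lies in at most `(q^k - 1)/(q^n - 1) · |S|` members. Cutting those members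
with a hyperplane `H` complementary to `v` covers the `(r-1)`-spaces of `H ≅ F^(n-1)` by
`(k-1)`-spaces: an `(r-1)`-space `R ≤ H` spans together with `v` an `r`-space, which lies in some
member `W ∋ v`, and then `R ≤ W ⊓ H`.
-/

open Finset

open scoped Classical

section Covering

variable {F V : Type*} [Field F] [AddCommGroup V] [Module F V]

def IsCovering (S : Finset (Submodule F V)) (k r : ℕ) : Prop :=
  (∀ W ∈ S, finrank F W = k) ∧ ∀ R : Submodule F V, finrank F R = r → ∃ W ∈ S, R ≤ W

theorem IsCovering.map {V' : Type*} [AddCommGroup V'] [Module F V'] {S : Finset (Submodule F V)}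
    {k r : ℕ} (hS : IsCovering S k r) (e : V ≃ₗ[F] V') :
    IsCovering (S.image (Submodule.map (e : V →ₗ[F] V'))) k r := by
  refine ⟨?_, fun R hR => ?_⟩
  · simp only [mem_image, forall_exists_index, and_imp, forall_apply_eq_imp_iff₂]
    intro W hW
    rw [LinearEquiv.finrank_map_eq, hS.1 W hW]
  · obtain ⟨W, hW, hRW⟩ := hS.2 (R.map (e.symm : V' →ₗ[F] V)) (by
      rw [LinearEquiv.finrank_map_eq, hR])
    refine ⟨W.map (e : V →ₗ[F] V'), mem_image_of_mem _ hW, ?_⟩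
    rwa [Submodule.map_le_iff_le_comap, ← Submodule.map_equiv_eq_comap_symm] at hRW

theorem Submodule.exists_le_finrank_eq [FiniteDimensional F V] (R : Submodule F V) {k : ℕ}
    (hRk : finrank F R ≤ k) (hkV : k ≤ finrank F V) : ∃ W, R ≤ W ∧ finrank F W = k := by
  induction k, hRk using Nat.le_induction with
  | base => exact ⟨R, le_rfl, rfl⟩
  | succ k _ ih =>
    obtain ⟨W, hRW, hW⟩ := ih (by omega)
    obtain ⟨v, -, hv⟩ := SetLike.exists_of_lt
      (Submodule.lt_top_of_finrank_lt_finrank (by rw [hW]; omega) : W < ⊤)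
    exact ⟨W ⊔ F ∙ v, hRW.trans le_sup_left,
      by rw [Submodule.finrank_sup_span_singleton hv, hW]⟩

end Covering

section CovNum

variable {F : Type} [Field F] [Fintype F]

theorem exists_isCovering_card_eq_covNum {n k r : ℕ} (hrk : r ≤ k) (hkn : k ≤ n) :
    ∃ S : Finset (Submodule F (Fin n → F)), IsCovering S k r ∧ S.card = covNum F n k r := by
  have : Fintype (Submodule F (Fin n → F)) := Fintype.ofFinite _
  have hall : IsCovering ({W | finrank F W = k} : Finset (Submodule F (Fin n → F))) k r := by
    refine ⟨by simp, fun R hR => ?_⟩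
    obtain ⟨W, hRW, hW⟩ := R.exists_le_finrank_eq (k := k) (by omega) (by simpa using hkn)
    exact ⟨W, by simpa using hW, hRW⟩
  obtain ⟨S, hcard, hS⟩ : covNum F n k r ∈
      {m | ∃ S : Finset (Submodule F (Fin n → F)), S.card = m ∧ IsCovering S k r} :=
    Nat.sInf_mem ⟨_, _, rfl, hall⟩
  exact ⟨S, hS, hcard⟩

theorem covNum_le_card_of_isCovering {V : Type*} [AddCommGroup V] [Module F V]
    [FiniteDimensional F V] {n k r : ℕ} (hV : finrank F V = n) {S : Finset (Submodule F V)}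
    (hS : IsCovering S k r) : covNum F n k r ≤ S.card := by
  obtain ⟨e⟩ := FiniteDimensional.nonempty_linearEquiv_of_finrank_eq
    (hV.trans (finrank_fin_fun F).symm)
  exact (Nat.sInf_le ⟨_, rfl, hS.map e⟩ : covNum F n k r ≤ _).trans card_image_le

end CovNum

section Counting

variable {R V : Type*} [Ring R] [AddCommGroup V] [Module R V] [Fintype V]

theorem sum_card_filter_mem_eq_sum_card_sub_one (S : Finset (Submodule R V)) :
    ∑ v ∈ univ.erase 0, #{W ∈ S | v ∈ W} = ∑ W ∈ S, (Nat.card W - 1) := by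
  have := sum_card_bipartiteAbove_eq_sum_card_bipartiteBelow (s := univ.erase (0 : V)) (t := S)
    (r := fun v W => v ∈ W)
  simp only [bipartiteAbove] at this
  rw [this]
  refine sum_congr rfl fun W _ => ?_
  rw [bipartiteBelow, filter_erase, card_erase_of_mem (by simp), Nat.card_eq_fintype_card,
    Fintype.card_subtype]

theorem exists_ne_zero_card_filter_mem_mul_le [Nontrivial V] {S : Finset (Submodule R V)} {c : ℕ}
    (hS : ∀ W ∈ S, Nat.card W = c) :
    ∃ v ≠ 0, #{W ∈ S | v ∈ W} * (Nat.card V - 1) ≤ #S * (c - 1) := by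
  have hcard : #(univ.erase (0 : V)) = Nat.card V - 1 := by
    rw [card_erase_of_mem (mem_univ _), card_univ, Nat.card_eq_fintype_card]
  obtain ⟨x, hx⟩ := exists_ne (0 : V)
  obtain ⟨v, hv, hle⟩ := exists_le_of_sum_le (s := univ.erase 0)
    ⟨x, mem_erase.2 ⟨hx, mem_univ x⟩⟩
    (f := fun v => #{W ∈ S | v ∈ W} * (Nat.card V - 1)) (g := fun _ => #S * (c - 1)) (by
      rw [← sum_mul, sum_card_filter_mem_eq_sum_card_sub_one, sum_congr rfl fun W hW => by
        rw [hS W hW], sum_const, sum_const, smul_eq_mul, smul_eq_mul, hcard, mul_comm])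
  exact ⟨v, ne_of_mem_erase hv, hle⟩

end Counting

section Derived

variable {F V : Type*} [Field F] [AddCommGroup V] [Module F V] [FiniteDimensional F V]
  {v : V} {H : Submodule F V}

theorem exists_compl_span_singleton (hv : v ≠ 0) :
    ∃ H : Submodule F V, v ∉ H ∧ H ⊔ F ∙ v = ⊤ ∧ finrank F H + 1 = finrank F V := by
  obtain ⟨H, hH⟩ := (F ∙ v).exists_isCompl
  refine ⟨H, (Submodule.disjoint_span_singleton' hv).1 hH.disjoint.symm,
    sup_comm H _ ▸ hH.codisjoint.eq_top, ?_⟩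
  rw [← Submodule.finrank_add_eq_of_isCompl hH, finrank_span_singleton hv, add_comm]

theorem finrank_inf_add_one_of_mem (hvH : v ∉ H) (hH : H ⊔ F ∙ v = ⊤) {W : Submodule F V}
    (hvW : v ∈ W) : finrank F ↥(W ⊓ H) + 1 = finrank F W := by
  have hW : W ⊓ H ⊔ F ∙ v = W := by
    rw [inf_sup_assoc_of_le _ ((Submodule.span_singleton_le_iff_mem _ _).2 hvW), hH, inf_top_eq]
  conv_rhs => rw [← hW]
  exact (Submodule.finrank_sup_span_singleton fun h => hvH (Submodule.mem_inf.1 h).2).symm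

noncomputable def derivedFamily (S : Finset (Submodule F V)) (v : V) (H : Submodule F V) :
    Finset (Submodule F H) :=
  {W ∈ S | v ∈ W}.image (Submodule.comap H.subtype)

theorem IsCovering.derived {S : Finset (Submodule F V)} {k r : ℕ}
    (hS : IsCovering S (k + 1) (r + 1)) (hvH : v ∉ H) (hH : H ⊔ F ∙ v = ⊤) :
    IsCovering (derivedFamily S v H) k r := by
  refine ⟨?_, fun R hR => ?_⟩
  · simp only [derivedFamily, mem_image, mem_filter]
    rintro _ ⟨W, ⟨hW, hvW⟩, rfl⟩
    have hWH := (finrank_inf_add_one_of_mem hvH hH hvW).trans (hS.1 W hW)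
    rw [← Submodule.finrank_map_subtype_eq, Submodule.map_comap_subtype, inf_comm]
    omega
  · have hvR : v ∉ R.map H.subtype := fun h => hvH (Submodule.map_subtype_le H R h)
    obtain ⟨W, hW, hle⟩ := hS.2 (R.map H.subtype ⊔ F ∙ v) (by
      rw [Submodule.finrank_sup_span_singleton hvR, Submodule.finrank_map_subtype_eq, hR])
    refine ⟨W.comap H.subtype, mem_image_of_mem _ (mem_filter.2 ⟨hW, ?_⟩),
      Submodule.map_le_iff_le_comap.1 (le_sup_left.trans hle)⟩
    exact hle (le_sup_right (a := R.map H.subtype) (Submodule.mem_span_singleton_self v))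

end Derived

theorem ceil_pow_sub_one_div_mul_le {q n k c d : ℕ} (hq : 1 < q) (hk : k ≠ 0)
    (h : c * (q ^ n - 1) ≤ d * (q ^ k - 1)) :
    ⌈((q : ℚ) ^ n - 1) / ((q : ℚ) ^ k - 1) * c⌉ ≤ d := by
  rw [Int.ceil_le, div_mul_eq_mul_div,
    div_le_iff₀ (sub_pos.2 (one_lt_pow₀ (by exact_mod_cast hq) hk)), mul_comm]
  have := Nat.one_le_pow n q (by omega)
  have := Nat.one_le_pow k q (by omega)
  exact_mod_cast h

theorem schonheim_bound (F : Type) [Field F] [Fintype F] (n k r : ℕ)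
    (hr1 : 1 ≤ r) (hrk : r ≤ k) (hkn : k ≤ n) :
    (⌈(((Fintype.card F : ℚ)) ^ n - 1) / ((Fintype.card F : ℚ) ^ k - 1) *
        (covNum F (n - 1) (k - 1) (r - 1) : ℚ)⌉ : ℤ) ≤ (covNum F n k r : ℤ) := by
  obtain ⟨k, rfl⟩ : ∃ k', k = k' + 1 := ⟨k - 1, by omega⟩
  obtain ⟨r, rfl⟩ : ∃ r', r = r' + 1 := ⟨r - 1, by omega⟩
  obtain ⟨n, rfl⟩ : ∃ n', n = n' + 1 := ⟨n - 1, by omega⟩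
  simp only [Nat.add_sub_cancel]
  obtain ⟨S, hS, hcard⟩ := exists_isCovering_card_eq_covNum (F := F) hrk hkn
  obtain ⟨v, hv, hfew⟩ := exists_ne_zero_card_filter_mem_mul_le (S := S)
    (c := Fintype.card F ^ (k + 1)) fun W hW => by
      rw [Module.natCard_eq_pow_finrank (K := F), hS.1 W hW, Nat.card_eq_fintype_card]
  obtain ⟨H, hvH, hH, hHrank⟩ := exists_compl_span_singleton (F := F) hv
  have hderived : covNum F n k r ≤ #{W ∈ S | v ∈ W} :=
    (covNum_le_card_of_isCovering (by simpa using hHrank) (hS.derived hvH hH)).trans card_image_le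
  rw [Nat.card_eq_fintype_card, Fintype.card_fun, Fintype.card_fin] at hfew
  exact hcard ▸ ceil_pow_sub_one_div_mul_le Fintype.one_lt_card (by omega)
    ((Nat.mul_le_mul_right _ hderived).trans hfew)
end

section
/- If S is a q-covering design C_q[n,k,r], P is a 1-dimensional subspace of F_q^n, and Q is an (n−1)-dimensional subspace with F_q^n = P ⊕ Q, then S' = {Y ∩ Q : Y ∈ S, P ⊆ Y} is a q-covering design C_q[n−1, k−1, r−1] inside Q: every (r−1)-dimensional subspace of Q is contained in some element of S', and each element of S' has dimension k−1. -/
/-!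
A block `Y ⊇ P` splits as `Y = P ⊕ (Y ∩ Q)` by the modular law, so `Y ∩ Q` has dimension
`k - 1`. Conversely, an `(r-1)`-space `A ≤ Q` meets `P` trivially, so `P ⊕ A` is an `r`-space;
any block covering it contains `P`, and its trace on `Q` contains `A`.
-/

open Module

theorem IsCompl.sup_inf_eq_of_le {α : Type*} [Lattice α] [BoundedOrder α] [IsModularLattice α]
    {p q y : α} (hpq : IsCompl p q) (hpy : p ≤ y) : p ⊔ y ⊓ q = y := by
  rw [inf_comm, ← sup_inf_assoc_of_le q hpy, hpq.sup_eq_top, top_inf_eq]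

namespace Submodule

variable {K V : Type*} [DivisionRing K] [AddCommGroup V] [Module K V] [FiniteDimensional K V]

theorem finrank_sup_of_disjoint {s t : Submodule K V} (h : Disjoint s t) :
    finrank K ↥(s ⊔ t) = finrank K s + finrank K t := by
  have := finrank_sup_add_finrank_inf_eq s t
  rwa [h.eq_bot, finrank_bot, add_zero] at this

theorem finrank_inf_add_finrank_of_isCompl_of_le {P Q Y : Submodule K V} (hPQ : IsCompl P Q)
    (hPY : P ≤ Y) : finrank K ↥(Y ⊓ Q) + finrank K P = finrank K Y := by
  rw [add_comm, ← finrank_sup_of_disjoint (hPQ.disjoint.mono_right inf_le_right),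
    hPQ.sup_inf_eq_of_le hPY]

end Submodule

theorem derived_covering_design_general (F : Type) [Field F] (n k r : ℕ)
    (hr1 : 1 ≤ r)
    (S : Finset (Submodule F (Fin n → F)))
    (hdim : ∀ W ∈ S, finrank F W = k)
    (hcov : ∀ R : Submodule F (Fin n → F), finrank F R = r → ∃ W ∈ S, R ≤ W)
    (P Q : Submodule F (Fin n → F))
    (hP : finrank F P = 1)
    (hcompl : IsCompl P Q) :
    (∀ Y ∈ S, P ≤ Y → finrank F ↥(Y ⊓ Q) = k - 1) ∧
    (∀ A : Submodule F (Fin n → F), A ≤ Q → finrank F A = r - 1 →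
      ∃ Y ∈ S, P ≤ Y ∧ A ≤ Y ⊓ Q) := by
  refine ⟨fun Y hY hPY => ?_, fun A hAQ hA => ?_⟩
  · have hsplit := Submodule.finrank_inf_add_finrank_of_isCompl_of_le hcompl hPY
    rw [hdim Y hY, hP] at hsplit
    omega
  · have hPA : finrank F ↥(P ⊔ A) = r := by
      rw [Submodule.finrank_sup_of_disjoint (hcompl.disjoint.mono_right hAQ), hP, hA]
      omega
    obtain ⟨Y, hY, hPAY⟩ := hcov _ hPA
    exact ⟨Y, hY, le_sup_left.trans hPAY, le_inf (le_sup_right.trans hPAY) hAQ⟩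

theorem derived_covering_design (F : Type) [Field F] [Fintype F] (n k r : ℕ)
    (hr1 : 1 ≤ r) (hrk : r ≤ k) (hkn : k ≤ n)
    (S : Finset (Submodule F (Fin n → F)))
    (hdim : ∀ W ∈ S, finrank F W = k)
    (hcov : ∀ R : Submodule F (Fin n → F), finrank F R = r → ∃ W ∈ S, R ≤ W)
    (P Q : Submodule F (Fin n → F))
    (hP : finrank F P = 1) (hQ : finrank F Q = n - 1)
    (hcompl : IsCompl P Q) :
    (∀ Y ∈ S, P ≤ Y → finrank F ↥(Y ⊓ Q) = k - 1) ∧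
    (∀ A : Submodule F (Fin n → F), A ≤ Q → finrank F A = r - 1 →
      ∃ Y ∈ S, P ≤ Y ∧ A ≤ Y ⊓ Q) :=
  derived_covering_design_general F n k r hr1 S hdim hcov P Q hP hcompl
end

section
/- C_q(n, k, r) ≤ [n−k+r choose r]_q for 0 ≤ r ≤ k ≤ n. -/
open Module

/-!
Project `F^n` onto its first `m = n - k + r` coordinates. The preimages of the `r`-dimensional
subspaces of `F^m` are pairwise distinct and have dimension `r + (n - m) = k`, and every
`r`-dimensional `R ≤ F^n` lies in one of them: its image has dimension at most `r`, so it lies in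
some `r`-dimensional `U ≤ F^m`, and then `R` lies in the preimage of `U`.
-/

namespace Submodule

variable {K V W : Type*} [DivisionRing K] [AddCommGroup V] [Module K V]
  [AddCommGroup W] [Module K W]

theorem finrank_comap_of_surjective [FiniteDimensional K V] {f : V →ₗ[K] W}
    (hf : Function.Surjective f) (U : Submodule K W) :
    finrank K (U.comap f) = finrank K U + finrank K (LinearMap.ker f) := by
  have : FiniteDimensional K W := Module.Finite.of_surjective f hf
  have hker : LinearMap.ker (U.mkQ ∘ₗ f) = U.comap f := by
    ext x
    simp [Submodule.Quotient.mk_eq_zero]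
  have hrange : LinearMap.range (U.mkQ ∘ₗ f) = ⊤ := by
    rw [LinearMap.range_comp, LinearMap.range_eq_top.mpr hf, Submodule.map_top,
      Submodule.range_mkQ]
  have hcomp := LinearMap.finrank_range_add_finrank_ker (U.mkQ ∘ₗ f)
  rw [hker, hrange, finrank_top] at hcomp
  have hquot := Submodule.finrank_quotient_add_finrank U
  have hf_rank := LinearMap.finrank_range_add_finrank_ker f
  rw [LinearMap.range_eq_top.mpr hf, finrank_top] at hf_rank
  omega

theorem exists_le_finrank_eq_s19 [FiniteDimensional K V] {N : Submodule K V} {r : ℕ}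
    (hN : finrank K N ≤ r) (hr : r ≤ finrank K V) :
    ∃ U : Submodule K V, N ≤ U ∧ finrank K U = r := by
  have hquot := Submodule.finrank_quotient_add_finrank N
  obtain ⟨v, hv⟩ := exists_linearIndependent_of_le_finrank
    (R := K) (M := V ⧸ N) (n := r - finrank K N) (by omega)
  refine ⟨(span K (Set.range v)).comap N.mkQ, fun x hx => ?_, ?_⟩
  · simp [(Submodule.Quotient.mk_eq_zero N).mpr hx]
  · rw [finrank_comap_of_surjective N.mkQ_surjective, finrank_span_eq_card hv, ker_mkQ,
      Fintype.card_fin]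
    omega

theorem exists_le_comap_finrank_eq [FiniteDimensional K V] [FiniteDimensional K W]
    {f : V →ₗ[K] W} {R : Submodule K V} {r : ℕ}
    (hR : finrank K R ≤ r) (hr : r ≤ finrank K W) :
    ∃ U : Submodule K W, R ≤ U.comap f ∧ finrank K U = r := by
  obtain ⟨U, hRU, hU⟩ := exists_le_finrank_eq_s19 ((finrank_map_le f R).trans hR) hr
  exact ⟨U, map_le_iff_le_comap.mp hRU, hU⟩

end Submodule

theorem covNum_upper_bound (F : Type) [Field F] [Fintype F] (n k r : ℕ)
    (hr : r ≤ k) (hk : k ≤ n) :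
    covNum F n k r ≤ gaussBinom F (n - k + r) r := by
  classical
  set m := n - k + r
  let f : (Fin n → F) →ₗ[F] (Fin m → F) := LinearMap.funLeft F F (Fin.castLE (by omega))
  have hf : Function.Surjective f :=
    LinearMap.funLeft_surjective_of_injective F F _ (Fin.castLE_injective _)
  have hker : finrank F (LinearMap.ker f) = k - r := by
    have := LinearMap.finrank_range_add_finrank_ker f
    rw [LinearMap.range_eq_top.mpr hf, finrank_top, finrank_fin_fun, finrank_fin_fun] at this
    omega
  let _ : Fintype {U : Submodule F (Fin m → F) // finrank F U = r} := Fintype.ofFinite _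
  let pullback : {U : Submodule F (Fin m → F) // finrank F U = r} ↪ Submodule F (Fin n → F) :=
    ⟨fun U => U.1.comap f,
      fun _ _ h => Subtype.ext (Submodule.comap_injective_of_surjective hf h)⟩
  refine Nat.sInf_le ⟨Finset.univ.map pullback, ?_, ?_, fun R hR => ?_⟩
  · rw [Finset.card_map, Finset.card_univ, gaussBinom, Nat.card_eq_fintype_card]
  · simp only [Finset.mem_map, Finset.mem_univ, true_and, forall_exists_index]
    rintro _ ⟨U, hU⟩ rfl
    change finrank F (U.comap f) = k
    rw [Submodule.finrank_comap_of_surjective hf, hU, hker]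
    omega
  · obtain ⟨U, hRU, hU⟩ := Submodule.exists_le_comap_finrank_eq (f := f) hR.le
      (by rw [finrank_fin_fun]; omega)
    exact ⟨pullback ⟨U, hU⟩, Finset.mem_map_of_mem _ (Finset.mem_univ _), hRU⟩
end
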